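/- arXiv:2308.11259 — 4 statements merged into one kernel-verified Lean document; each statement's English description precedes it below -/
import Mathlib

section
/- In oriented bond percolation on Z^2, define a vertex to be occupied if there is an open oriented path from the origin to it, and define an edge to be good if it is open, starts from an occupied vertex (x,y), and either is vertical, or is horizontal (to (x+1,y)) and there is no open oriented path from the origin to (x+1,y) passing through (x+1,y-1). Then a vertex v is occupied if and only if there is a path of good edges from the origin to v. -/
/-- A percolation configuration: the status (open = `true`) of each oriented edge of
`ℤ²`, an edge being encoded as its starting vertex together with a direction
(`false` = horizontal, to `(x+1,y)`; `true` = vertical, to `(x,y+1)`). -/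
abbrev Config := (ℤ × ℤ) × Bool → Bool

/-- One open oriented step. -/
def OpenStep (ω : Config) (u v : ℤ × ℤ) : Prop :=
  (ω (u, false) = true ∧ v = u + (1, 0)) ∨ (ω (u, true) = true ∧ v = u + (0, 1))

/-- A vertex is occupied if it is reachable from the origin by an open oriented path. -/
def Occupied (ω : Config) (v : ℤ × ℤ) : Prop :=
  Relation.ReflTransGen (OpenStep ω) (0, 0) v

/-- The edge from `u` in direction `d` is good: it is open, starts from an occupied
vertex, and either is vertical, or is horizontal and there is no open path from the
origin to `u + (1,0)` passing through `u + (1,-1)`. -/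
def GoodEdge (ω : Config) (u : ℤ × ℤ) (d : Bool) : Prop :=
  ω (u, d) = true ∧ Occupied ω u ∧
    (d = true ∨ ¬ (Occupied ω (u + (1, -1)) ∧ ω (u + (1, -1), true) = true))

/-- One step along a good edge. -/
def GoodStep (ω : Config) (u v : ℤ × ℤ) : Prop :=
  (GoodEdge ω u false ∧ v = u + (1, 0)) ∨ (GoodEdge ω u true ∧ v = u + (0, 1))

/-!
Every open step raises `x + y` by one, so we induct on `x + y`. An open edge from an occupied
vertex `u` is good unless it is horizontal and `u + (1,0)` is reached through the open vertical
edge from the occupied vertex `u + (1,-1)`; that vertical edge is good and starts at the same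
value of `x + y` as `u`, so the induction hypothesis applies to it instead.
-/

open Relation

theorem OpenStep.sum_eq {ω : Config} {u v : ℤ × ℤ} (h : OpenStep ω u v) :
    v.1 + v.2 = u.1 + u.2 + 1 := by
  rcases h with ⟨_, rfl⟩ | ⟨_, rfl⟩ <;> simp only [Prod.fst_add, Prod.snd_add] <;> ring

theorem Occupied.sum_nonneg {ω : Config} {v : ℤ × ℤ} (h : Occupied ω v) : 0 ≤ v.1 + v.2 := by
  induction h with
  | refl => exact le_rfl
  | tail _ hstep ih => linarith [hstep.sum_eq]

theorem GoodStep.openStep {ω : Config} {u v : ℤ × ℤ} (h : GoodStep ω u v) : OpenStep ω u v := by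
  rcases h with ⟨hg, rfl⟩ | ⟨hg, rfl⟩
  · exact Or.inl ⟨hg.1, rfl⟩
  · exact Or.inr ⟨hg.1, rfl⟩

theorem OpenStep.goodStep_or_detour {ω : Config} {u v : ℤ × ℤ} (hu : Occupied ω u)
    (h : OpenStep ω u v) :
    GoodStep ω u v ∨ ∃ w, Occupied ω w ∧ w.1 + w.2 = u.1 + u.2 ∧ GoodStep ω w v := by
  rcases h with ⟨hopen, rfl⟩ | ⟨hopen, rfl⟩
  · by_cases hdetour : Occupied ω (u + (1, -1)) ∧ ω (u + (1, -1), true) = true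
    · refine Or.inr ⟨u + (1, -1), hdetour.1, ?_, Or.inr ⟨⟨hdetour.2, hdetour.1, Or.inl rfl⟩, ?_⟩⟩
      · simp only [Prod.fst_add, Prod.snd_add]; ring
      · ext <;> simp
    · exact Or.inl (Or.inl ⟨⟨hopen, hu, Or.inr hdetour⟩, rfl⟩)
  · exact Or.inl (Or.inr ⟨⟨hopen, hu, Or.inl rfl⟩, rfl⟩)

theorem Occupied.reflTransGen_goodStep_of_sum_eq {ω : Config} (n : ℕ) :
    ∀ v : ℤ × ℤ, Occupied ω v → v.1 + v.2 = n → ReflTransGen (GoodStep ω) (0, 0) v := by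
  induction n with
  | zero =>
    intro v hv hsum
    cases hv with
    | refl => exact .refl
    | tail hu hstep =>
      push_cast at hsum
      linarith [Occupied.sum_nonneg hu, hstep.sum_eq]
  | succ n ih =>
    intro v hv hsum
    cases hv with
    | refl => exact .refl
    | @tail u _ hu hstep =>
      have hsum_u : u.1 + u.2 = n := by push_cast at hsum; linarith [hstep.sum_eq]
      rcases hstep.goodStep_or_detour hu with hgood | ⟨w, hw, hsum_w, hgood⟩
      · exact (ih u hu hsum_u).tail hgood
      · exact (ih w hw (hsum_w.trans hsum_u)).tail hgood

/-- A vertex is occupied iff there is a path of good edges from the origin to it. -/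
theorem stmt_3 (ω : Config) (v : ℤ × ℤ) :
    Occupied ω v ↔ Relation.ReflTransGen (GoodStep ω) (0, 0) v := by
  constructor
  · intro hv
    exact Occupied.reflTransGen_goodStep_of_sum_eq (v.1 + v.2).toNat v hv
      (Int.toNat_of_nonneg hv.sum_nonneg).symm
  · intro hgood
    exact ReflTransGen.mono (fun _ _ => GoodStep.openStep) _ _ hgood
end

section
/- In oriented bond percolation on Z^2 with good edges defined as in the paper, for every occupied vertex v there is exactly one path of good edges from the origin to v. -/
/-!
Every occupied vertex `v ≠ 0` is entered by a good edge: the last edge of an open path to `v`,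
unless that edge is horizontal and disqualified, in which case the vertical edge into `v` is open
from an occupied vertex and hence good. Conversely `v` is entered by at most one good edge, since
a horizontal good edge into `v` rules out exactly an open vertical edge into `v` from an occupied
vertex. So good edges form a tree: walking back along the unique good predecessors lowers `x + y`
by one at each step, hence reaches the origin, which has no predecessor, and any good path from
the origin to `v` must be this walk.
-/

open Relation

namespace List

variable {α : Type*} {s : α → α → Prop}

theorem IsChain.eq_of_rightUnique {a : α} (hs : Relator.RightUnique s) (ha : ∀ y, ¬ s a y) :
    ∀ {l₁ l₂ : List α}, l₁.IsChain s → l₂.IsChain s → l₁.head? = l₂.head? →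
      l₁.getLast? = some a → l₂.getLast? = some a → l₁ = l₂
  | [], [], _, _, _, _, _ => rfl
  | [x], [_], _, _, hh, _, _ => by simpa using hh
  | [x], _ :: y :: _, _, h₂, hh, hl₁, _ => by
    obtain ⟨rfl, rfl⟩ : x = a ∧ _ := ⟨by simpa using hl₁, by simpa using hh⟩
    exact absurd h₂.rel (ha y)
  | _ :: y :: _, [x], h₁, _, hh, _, hl₂ => by
    obtain ⟨rfl, rfl⟩ : x = a ∧ _ := ⟨by simpa using hl₂, by simpa using hh.symm⟩
    exact absurd h₁.rel (ha y)
  | x :: y₁ :: t₁, x' :: y₂ :: t₂, h₁, h₂, hh, hl₁, hl₂ => by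
    obtain rfl : x = x' := by simpa using hh
    obtain rfl : y₁ = y₂ := hs h₁.rel h₂.rel
    rw [getLast?_cons_cons] at hl₁ hl₂
    exact congrArg (x :: ·) (eq_of_rightUnique hs ha h₁.of_cons h₂.of_cons rfl hl₁ hl₂)
  | [], _ :: _, _, _, hh, _, _ | _ :: _, [], _, _, hh, _, _ => by simp at hh

theorem IsChain.eq_of_leftUnique {a : α} (hs : Relator.LeftUnique s) (ha : ∀ y, ¬ s y a)
    {l₁ l₂ : List α} (h₁ : l₁.IsChain s) (h₂ : l₂.IsChain s) (hh₁ : l₁.head? = some a)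
    (hh₂ : l₂.head? = some a) (hl : l₁.getLast? = l₂.getLast?) : l₁ = l₂ := by
  rw [← isChain_reverse] at h₁ h₂
  rw [← getLast?_reverse] at hh₁ hh₂
  rw [← head?_reverse, ← head?_reverse] at hl
  exact reverse_injective <| h₁.eq_of_rightUnique hs.flip ha h₂ hl hh₁ hh₂

end List

variable {ω : Config} {u v : ℤ × ℤ}

theorem Occupied.nonneg (h : Occupied ω v) : 0 ≤ v.1 ∧ 0 ≤ v.2 := by
  induction h with
  | refl => simp
  | tail _ hstep ih =>
    rcases hstep with ⟨_, rfl⟩ | ⟨_, rfl⟩ <;>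
      simp only [Prod.fst_add, Prod.snd_add] <;> omega

theorem GoodStep.occupied (h : GoodStep ω u v) : Occupied ω u := by
  rcases h with ⟨hu, _⟩ | ⟨hu, _⟩ <;> exact hu.2.1

theorem GoodStep.level_succ (h : GoodStep ω u v) : v.1 + v.2 = u.1 + u.2 + 1 := by
  rcases h with ⟨_, rfl⟩ | ⟨_, rfl⟩ <;> simp only [Prod.fst_add, Prod.snd_add] <;> omega

theorem not_goodStep_zero : ¬ GoodStep ω u (0, 0) := fun h ↦ by
  have := h.level_succ
  have := h.occupied.nonneg
  simp only at *
  omega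

theorem GoodStep.leftUnique : Relator.LeftUnique (GoodStep ω) := by
  intro u u' v h h'
  rcases h with ⟨hu, rfl⟩ | ⟨hu, rfl⟩ <;> rcases h' with ⟨hu', hv⟩ | ⟨hu', hv⟩
  · exact add_right_cancel hv
  · obtain rfl : u' = u + (1, -1) := by
      simp only [Prod.ext_iff, Prod.fst_add, Prod.snd_add] at hv ⊢; omega
    exact (hu.2.2.resolve_left Bool.false_ne_true ⟨hu'.2.1, hu'.1⟩).elim
  · obtain rfl : u = u' + (1, -1) := by
      simp only [Prod.ext_iff, Prod.fst_add, Prod.snd_add] at hv ⊢; omega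
    exact (hu'.2.2.resolve_left Bool.false_ne_true ⟨hu.2.1, hu.1⟩).elim
  · exact add_right_cancel hv

theorem Occupied.exists_goodStep (h : Occupied ω v) (hv : v ≠ (0, 0)) :
    ∃ u, GoodStep ω u v := by
  obtain rfl | ⟨u, hu, hstep⟩ := h.cases_tail
  · exact absurd rfl hv
  by_cases hbelow : Occupied ω (v + (0, -1)) ∧ ω (v + (0, -1), true) = true
  · refine ⟨v + (0, -1), .inr ⟨⟨hbelow.2, hbelow.1, .inl rfl⟩, ?_⟩⟩
    simp only [Prod.ext_iff, Prod.fst_add, Prod.snd_add]; omega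
  rcases hstep with ⟨hopen, rfl⟩ | ⟨hopen, rfl⟩
  · have hcorner : u + (1, -1) = u + (1, 0) + (0, -1) := by
      simp only [Prod.ext_iff, Prod.fst_add, Prod.snd_add]; omega
    exact ⟨u, .inl ⟨⟨hopen, hu, .inr (hcorner ▸ hbelow)⟩, rfl⟩⟩
  · have hbelow' : u + (0, 1) + (0, -1) = u := by
      simp only [Prod.ext_iff, Prod.fst_add, Prod.snd_add]; omega
    rw [hbelow'] at hbelow
    exact (hbelow ⟨hu, hopen⟩).elim

theorem Occupied.reflTransGen_goodStep (h : Occupied ω v) :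
    ReflTransGen (GoodStep ω) (0, 0) v := by
  obtain ⟨n, hn⟩ : ∃ n : ℕ, v.1 + v.2 = n :=
    ⟨(v.1 + v.2).toNat, by have := h.nonneg; omega⟩
  induction n generalizing v with
  | zero =>
    obtain rfl : v = (0, 0) := by have := h.nonneg; simp only [Prod.ext_iff]; omega
    exact .refl
  | succ n ih =>
    obtain ⟨u, hu⟩ := h.exists_goodStep (by rintro rfl; simp at hn; omega)
    exact (ih hu.occupied (by have := hu.level_succ; omega)).tail hu

/-- For every occupied vertex there is exactly one path of good edges from the origin
to it (a path being recorded as its list of visited vertices). -/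
theorem stmt_4 (ω : Config) (v : ℤ × ℤ) (h : Occupied ω v) :
    ∃! l : List (ℤ × ℤ),
      l.head? = some (0, 0) ∧ l.getLast? = some v ∧ l.Chain' (GoodStep ω) := by
  obtain ⟨l, hchain, hlast⟩ :=
    List.exists_isChain_cons_of_relationReflTransGen h.reflTransGen_goodStep
  have hends : ((0, 0) :: l).getLast? = some v := by
    rw [List.getLast?_eq_some_getLast (List.cons_ne_nil _ _), hlast]
  refine ⟨(0, 0) :: l, ⟨rfl, hends, hchain⟩, ?_⟩
  rintro l' ⟨hhead', hlast', hchain'⟩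
  exact hchain'.eq_of_leftUnique GoodStep.leftUnique (fun _ ↦ not_goodStep_zero) hchain
    hhead' rfl (hlast'.trans hends.symm)
end

section
/- In oriented bond percolation on Z^3 with good edges defined by the priority order e_3 > e_2 > e_1, every occupied vertex is reached from the origin by exactly one path of good edges. -/
/-- A configuration of the oriented bond percolation on `ℤ³`: the status of each edge,
an edge being encoded by its starting vertex and its direction `i : Fin 3`
(index `0` for `e₁`, `1` for `e₂`, `2` for `e₃`). -/
abbrev Config3 := (Fin 3 → ℤ) × Fin 3 → Bool

def OpenStep3 (ω : Config3) (u v : Fin 3 → ℤ) : Prop :=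
  ∃ i : Fin 3, ω (u, i) = true ∧ v = u + Pi.single i 1

def Occupied3 (ω : Config3) (v : Fin 3 → ℤ) : Prop :=
  Relation.ReflTransGen (OpenStep3 ω) 0 v

/-- Good edges in `ℤ³`, with the priority order `e₃ > e₂ > e₁`. -/
def GoodEdge3 (ω : Config3) (u : Fin 3 → ℤ) (i : Fin 3) : Prop :=
  ω (u, i) = true ∧ Occupied3 ω u ∧
    (i = 2 ∨
     (i = 1 ∧ ¬ (Occupied3 ω (u + Pi.single 1 1 - Pi.single 2 1) ∧
        ω (u + Pi.single 1 1 - Pi.single 2 1, 2) = true)) ∨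
     (i = 0 ∧ ¬ ((Occupied3 ω (u + Pi.single 0 1 - Pi.single 2 1) ∧
          ω (u + Pi.single 0 1 - Pi.single 2 1, 2) = true) ∨
        (Occupied3 ω (u + Pi.single 0 1 - Pi.single 1 1) ∧
          ω (u + Pi.single 0 1 - Pi.single 1 1, 1) = true))))

def GoodStep3 (ω : Config3) (u v : Fin 3 → ℤ) : Prop :=
  ∃ i : Fin 3, GoodEdge3 ω u i ∧ v = u + Pi.single i 1

/-!
An edge `v - eᵢ → v` is good exactly when it is open, starts from an occupied vertex, and is the
highest-priority edge into `v` with these two properties. Hence every occupied `v ≠ 0` has exactly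
one good incoming edge, and none enters the origin. Since good edges raise the coordinate sum, which
is nonnegative on occupied vertices, following good edges backwards from `v` terminates, and it can
only end at the origin: this backward walk is the unique good path.
-/

namespace List

variable {α : Type*} {R : α → α → Prop} {a : α}

theorem exists_isChain_flip_of_wellFounded {P : α → Prop} (hwf : WellFounded R)
    (hpred : ∀ v, P v → v ≠ a → ∃ u, P u ∧ R u v) {v : α} (hv : P v) :
    ∃ l : List α, l.head? = some v ∧ l.getLast? = some a ∧ l.IsChain (flip R) := by
  induction v using hwf.induction with
  | _ v ih =>
    by_cases hva : v = a
    · exact ⟨[v], rfl, by simp [hva], isChain_singleton v⟩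
    obtain ⟨u, hu, huv⟩ := hpred v hv hva
    obtain ⟨l, hl, hla, hc⟩ := ih u huv hu
    obtain ⟨l, rfl⟩ := head?_eq_some_iff.1 hl
    exact ⟨v :: u :: l, rfl, by rwa [getLast?_cons_cons], isChain_cons_cons.2 ⟨huv, hc⟩⟩

theorem eq_of_isChain_flip_of_leftUnique (hR : Relator.LeftUnique R) (ha : ∀ u, ¬ R u a) :
    ∀ {l₁ l₂ : List α} {v : α}, l₁.head? = some v → l₂.head? = some v →
      l₁.getLast? = some a → l₂.getLast? = some a →
      l₁.IsChain (flip R) → l₂.IsChain (flip R) → l₁ = l₂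
  | [_], [_], _, rfl, h, _, _, _, _ => by simpa using h.symm
  | [v], _ :: w :: _, _, rfl, h, hl₁, _, _, hc => by
    simp only [head?_cons, Option.some.injEq, getLast?_singleton] at h hl₁
    subst_vars
    exact absurd (isChain_cons_cons.1 hc).1 (ha w)
  | _ :: w :: _, [v], _, rfl, h, _, hl₂, hc, _ => by
    simp only [head?_cons, Option.some.injEq, getLast?_singleton] at h hl₂
    subst_vars
    exact absurd (isChain_cons_cons.1 hc).1 (ha w)
  | v :: w₁ :: l₁, _ :: w₂ :: l₂, _, rfl, h, hl₁, hl₂, hc₁, hc₂ => by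
    obtain rfl : _ = v := Option.some.inj h
    rw [isChain_cons_cons] at hc₁ hc₂
    obtain rfl : w₁ = w₂ := hR hc₁.1 hc₂.1
    rw [getLast?_cons_cons] at hl₁ hl₂
    rw [eq_of_isChain_flip_of_leftUnique hR ha rfl rfl hl₁ hl₂ hc₁.2 hc₂.2]
  | [], _, _, h, _, _, _, _, _ | _, [], _, _, h, _, _, _, _ => by simp at h

theorem existsUnique_isChain_of_wellFounded {P : α → Prop} (hwf : WellFounded R)
    (hpred : ∀ v, P v → v ≠ a → ∃ u, P u ∧ R u v) (hR : Relator.LeftUnique R)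
    (ha : ∀ u, ¬ R u a) {v : α} (hv : P v) :
    ∃! l : List α, l.head? = some a ∧ l.getLast? = some v ∧ l.IsChain R := by
  rw [reverse_bijective.existsUnique_iff]
  simp only [head?_reverse, getLast?_reverse, isChain_reverse]
  obtain ⟨l, hlv, hla, hc⟩ := exists_isChain_flip_of_wellFounded hwf hpred hv
  exact ⟨l, ⟨hla, hlv, hc⟩, fun l' ⟨hla', hlv', hc'⟩ =>
    eq_of_isChain_flip_of_leftUnique hR ha hlv' hlv hla' hla hc' hc⟩

end List

section

variable {ω : Config3}

def OccupiedInEdge3 (ω : Config3) (v : Fin 3 → ℤ) (i : Fin 3) : Prop :=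
  Occupied3 ω (v - Pi.single i 1) ∧ ω (v - Pi.single i 1, i) = true

theorem goodEdge3_iff {u : Fin 3 → ℤ} {i : Fin 3} :
    GoodEdge3 ω u i ↔ OccupiedInEdge3 ω (u + Pi.single i 1) i ∧
      ∀ j, i < j → ¬ OccupiedInEdge3 ω (u + Pi.single i 1) j := by
  unfold GoodEdge3 OccupiedInEdge3
  fin_cases i <;> simp [Fin.forall_fin_succ] <;> tauto

theorem goodStep3_iff {u v : Fin 3 → ℤ} :
    GoodStep3 ω u v ↔ ∃ i, u = v - Pi.single i 1 ∧ OccupiedInEdge3 ω v i ∧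
      ∀ j, i < j → ¬ OccupiedInEdge3 ω v j := by
  simp only [GoodStep3, goodEdge3_iff]
  constructor
  · rintro ⟨i, hi, rfl⟩
    exact ⟨i, (add_sub_cancel_right u _).symm, hi⟩
  · rintro ⟨i, rfl, hi⟩
    exact ⟨i, by rwa [sub_add_cancel], (sub_add_cancel v _).symm⟩

theorem exists_occupiedInEdge3 {v : Fin 3 → ℤ} (hv : Occupied3 ω v) (h0 : v ≠ 0) :
    ∃ i, OccupiedInEdge3 ω v i := by
  obtain h | ⟨u, hu, i, hi, rfl⟩ := hv.cases_tail
  · exact absurd h h0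
  · exact ⟨i, by simpa [OccupiedInEdge3] using ⟨hu, hi⟩⟩

theorem exists_goodStep3 {v : Fin 3 → ℤ} (hv : Occupied3 ω v) (h0 : v ≠ 0) :
    ∃ u, Occupied3 ω u ∧ GoodStep3 ω u v := by
  classical
  obtain ⟨i₀, hi₀⟩ := exists_occupiedInEdge3 hv h0
  obtain ⟨i, hi, hmax⟩ := (Finset.univ.filter (OccupiedInEdge3 ω v)).exists_max_image id
    ⟨i₀, by simpa using hi₀⟩
  simp only [Finset.mem_filter, Finset.mem_univ, true_and, id] at hi hmax
  exact ⟨_, hi.1, goodStep3_iff.2 ⟨i, rfl, hi, fun j hij hj => (hmax j hj).not_gt hij⟩⟩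

theorem leftUnique_goodStep3 : Relator.LeftUnique (GoodStep3 ω) := by
  intro u u' v h h'
  obtain ⟨i, rfl, hi, hmax⟩ := goodStep3_iff.1 h
  obtain ⟨i', rfl, hi', hmax'⟩ := goodStep3_iff.1 h'
  obtain hlt | rfl | hgt := lt_trichotomy i i'
  · exact absurd hi' (hmax i' hlt)
  · rfl
  · exact absurd hi (hmax' i hgt)

theorem OpenStep3.sum_eq {u v : Fin 3 → ℤ} (h : OpenStep3 ω u v) :
    ∑ j, v j = ∑ j, u j + 1 := by
  obtain ⟨i, -, rfl⟩ := h
  simp [Finset.sum_add_distrib]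

theorem GoodStep3.openStep3 {u v : Fin 3 → ℤ} (h : GoodStep3 ω u v) : OpenStep3 ω u v :=
  let ⟨i, hi, hv⟩ := h
  ⟨i, hi.1, hv⟩

theorem GoodStep3.occupied_left {u v : Fin 3 → ℤ} (h : GoodStep3 ω u v) : Occupied3 ω u :=
  let ⟨_, hi, _⟩ := h
  hi.2.1

theorem Occupied3.sum_nonneg {v : Fin 3 → ℤ} (hv : Occupied3 ω v) : 0 ≤ ∑ j, v j := by
  induction hv with
  | refl => simp
  | tail _ hstep ih =>
    rw [hstep.sum_eq]
    omega

theorem wellFounded_goodStep3 : WellFounded (GoodStep3 ω) :=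
  Subrelation.wf (fun {u v} h => by
      change (∑ j, u j).toNat < (∑ j, v j).toNat
      have := h.occupied_left.sum_nonneg
      rw [h.openStep3.sum_eq]
      omega)
    (InvImage.wf (fun v : Fin 3 → ℤ => (∑ j, v j).toNat) wellFounded_lt)

theorem not_goodStep3_zero (u : Fin 3 → ℤ) : ¬ GoodStep3 ω u 0 := fun h => by
  have hu := h.occupied_left.sum_nonneg
  have h0 := h.openStep3.sum_eq
  simp only [Pi.zero_apply, Finset.sum_const_zero] at h0
  omega

end


/-- Every occupied vertex of `ℤ³` is reached from the origin by exactly one path of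
good edges. -/
theorem stmt_14 (ω : Config3) (v : Fin 3 → ℤ) (h : Occupied3 ω v) :
    ∃! l : List (Fin 3 → ℤ),
      l.head? = some 0 ∧ l.getLast? = some v ∧ l.Chain' (GoodStep3 ω) :=
  List.existsUnique_isChain_of_wellFounded wellFounded_goodStep3
    (fun _ => exists_goodStep3) leftUnique_goodStep3 not_goodStep3_zero h
end

section
/- Monotonicity of the state coupling: if s and s' are states (binary sequences of length k beginning with 1) with s ≤ s' coordinatewise, and the children of both are computed from the same configuration of open edges, then each child of s is coordinatewise at most the corresponding child of s'. In particular, by induction, every state s_m produced by the coupling is coordinatewise at most the true occupancy pattern of the corresponding k vertices in the percolation process. -/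
/-- The occupancy mark of the `j`-th successor vertex computed from a state `s`
(occupancy of `k` consecutive vertices of equal height) and the configuration `η` of
the edges leaving those vertices (`η i true` = status of the upward edge of vertex `i`,
`η i false` = status of the rightward edge):  successor `j` is marked if it is reached
via a good edge from a marked vertex, a rightward infection being good only when the
target is not also infected from below. -/
def childMark (k : ℕ) (s : Fin k → Bool) (η : Fin k → Bool → Bool) (j : Fin (k + 1)) :
    Bool :=
  ((if h : (j : ℕ) < k then s ⟨j, h⟩ && η ⟨j, h⟩ true else false) ||
   (if h : 0 < (j : ℕ) then
      (s ⟨(j : ℕ) - 1, by have := j.isLt; omega⟩ &&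
        (η ⟨(j : ℕ) - 1, by have := j.isLt; omega⟩ false &&
          ! (if h' : (j : ℕ) < k then s ⟨j, h'⟩ && η ⟨j, h'⟩ true else false)))
    else false))

/-- The up-child of a state: the interval of `k` successors starting above the
leftmost vertex. -/
def upChild (k : ℕ) (s : Fin k → Bool) (η : Fin k → Bool → Bool) : Fin k → Bool :=
  fun i => childMark k s η i.castSucc

/-- The right-child of a state: the interval of `k` successors starting above-right of
the leftmost vertex. -/
def rightChild (k : ℕ) (s : Fin k → Bool) (η : Fin k → Bool → Bool) : Fin k → Bool :=
  fun i => childMark k s η i.succ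

/-!
A successor is marked exactly when it is reached from a marked vertex by an open edge: the
restriction on rightward infections only decides which edge gets the credit, not whether the
successor is marked (`a || (b && !a) = a || b`). Hence children depend monotonically on the
state, and the coupled states stay below the occupancy pattern by induction on the height.
-/

theorem childMark_eq_true_iff (k : ℕ) (s : Fin k → Bool) (η : Fin k → Bool → Bool)
    (j : Fin (k + 1)) :
    childMark k s η j = true ↔
      (∃ h : (j : ℕ) < k, s ⟨j, h⟩ = true ∧ η ⟨j, h⟩ true = true) ∨
      ∃ h : 0 < (j : ℕ),
        s ⟨j - 1, by have := j.isLt; omega⟩ = true ∧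
          η ⟨j - 1, by have := j.isLt; omega⟩ false = true := by
  unfold childMark
  split_ifs <;> simp_all <;> grind

theorem childMark_mono (k : ℕ) (η : Fin k → Bool → Bool) (j : Fin (k + 1)) :
    Monotone fun s => childMark k s η j := by
  intro s s' hs
  have hs' : ∀ i, s i = true → s' i = true := fun i => Bool.le_iff_imp.mp (hs i)
  refine Bool.le_iff_imp.mpr fun h => ?_
  rw [childMark_eq_true_iff] at h ⊢
  rcases h with ⟨hj, hsj, hη⟩ | ⟨hj, hsj, hη⟩
  · exact Or.inl ⟨hj, hs' _ hsj, hη⟩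
  · exact Or.inr ⟨hj, hs' _ hsj, hη⟩

theorem upChild_mono (k : ℕ) (η : Fin k → Bool → Bool) : Monotone fun s => upChild k s η :=
  fun _ _ hs i => childMark_mono k η i.castSucc hs

theorem rightChild_mono (k : ℕ) (η : Fin k → Bool → Bool) :
    Monotone fun s => rightChild k s η :=
  fun _ _ hs i => childMark_mono k η i.succ hs

theorem le_of_monotone_step {α : Type*} [Preorder α] {f : ℕ → α → α} {x y : ℕ → α}
    (hf : ∀ m, Monotone (f m)) (h0 : x 0 ≤ y 0) (hx : ∀ m, x (m + 1) = f m (x m))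
    (hy : ∀ m, f m (y m) ≤ y (m + 1)) (m : ℕ) : x m ≤ y m := by
  induction m with
  | zero => exact h0
  | succ m ih => exact (hx m).trans_le ((hf m ih).trans (hy m))

/-- Monotonicity of the state coupling: if `s ≤ s'` coordinatewise and the children are
computed from the same edge configuration, then each child of `s` is coordinatewise at
most the corresponding child of `s'`.  In particular, by induction, every state `s m`
produced by the coupling is coordinatewise at most the true occupancy pattern `o m`
of the corresponding vertices (which dominates the computed child at each step). -/
theorem stmt_16 (k : ℕ) (hk : 0 < k) :
    (∀ (s s' : Fin k → Bool) (η : Fin k → Bool → Bool),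
      s ⟨0, hk⟩ = true → s' ⟨0, hk⟩ = true →
      (∀ i, s i = true → s' i = true) →
      (∀ i, upChild k s η i = true → upChild k s' η i = true) ∧
      (∀ i, rightChild k s η i = true → rightChild k s' η i = true)) ∧
    (∀ (η : ℕ → Fin k → Bool → Bool) (d : ℕ → Bool) (s o : ℕ → Fin k → Bool),
      (∀ i, s 0 i = true → o 0 i = true) →
      (∀ m, s (m + 1) =
        (if d m then rightChild k (s m) (η m) else upChild k (s m) (η m))) →
      (∀ m i, (if d m then rightChild k (o m) (η m) else upChild k (o m) (η m)) i = true →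
        o (m + 1) i = true) →
      ∀ m i, s m i = true → o m i = true) := by
  simp only [← Bool.le_iff_imp]
  refine ⟨fun s s' η _ _ hs => ⟨upChild_mono k η hs, rightChild_mono k η hs⟩, ?_⟩
  intro η d s o h0 hs ho m
  have hstep : ∀ m, Monotone fun t => if d m then rightChild k t (η m) else upChild k t (η m) :=
    fun m => by split_ifs; exacts [rightChild_mono k (η m), upChild_mono k (η m)]
  exact le_of_monotone_step hstep h0 hs ho m
end
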